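/- Over an infinite field K, any pseudo-band module Bd(vʳ, φ) is a direct summand of a pseudo-band module Bd(vˢ, ψ) for every integer s ≥ r. -/

import Mathlib

/-! # Framework for string algebras

Definitions supporting the formalization of results from
Huisgen-Zimmermann and Smalø, "The homology of string algebras I".

`Λ = KΓ/I` is presented intrinsically: a `StringPres K Λ` consists of a finite quiver,
a complete set of orthogonal primitive idempotents and arrow elements of `Λ`, such that
the nonzero path monomials form a `K`-basis of `Λ` (this encodes that the relation ideal
is generated by paths, i.e. monomial), together with the special biserial conditions.

Paths are encoded by lists of arrows, the *head* of the list being the *last* arrow of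
the path (so that `List.prod` of the arrow images is the corresponding composite in `Λ`,
with the convention `pq` = "`p` after `q`", and right subpaths are list suffixes). -/

namespace StringAlg

open Function

section Defs

variable {K Λ : Type} [Field K] [Ring Λ] [Algebra K Λ]

/-- Composability of a list of arrows (head of list = last arrow of the path). -/
def pathChain {V A : Type} (s t : A → V) (l : List A) : Prop :=
  l.Chain' (fun x y => s x = t y)

/-- The path encoded by `l` starts (i.e. has its source) at the vertex `v`. -/
def startsAt {V A : Type} (s : A → V) (v : V) (l : List A) : Prop :=
  ∀ h : l ≠ [], s (l.getLast h) = v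

/-- The monomial: product of the arrows along the path, times the source idempotent. -/
def monOf {Λ V A : Type} [Ring Λ] (arr : A → Λ) (e : V → Λ) (v : V) (l : List A) : Λ :=
  (l.map arr).prod * e v

end Defs

/-- A presentation of `Λ` as a string algebra `KΓ/I`. -/
structure StringPres (K Λ : Type) [Field K] [Ring Λ] [Algebra K Λ] : Type 1 where
  V : Type
  A : Type
  [fV : Fintype V]
  src : A → V
  tgt : A → V
  e : V → Λ
  arr : A → Λ
  idem : ∀ v, e v * e v = e v
  orth : ∀ v w, v ≠ w → e v * e w = 0
  sum_one : ∑ v, e v = 1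
  arr_eq : ∀ a, e (tgt a) * arr a * e (src a) = arr a
  arr_ne : ∀ a, arr a ≠ 0
  basis_indep : LinearIndependent K
    (fun p : {p : V × List A // pathChain src tgt p.2 ∧ startsAt src p.1 p.2 ∧
        monOf arr e p.1 p.2 ≠ 0} => monOf arr e p.1.1 p.1.2)
  basis_span : Submodule.span K
    (Set.range (fun p : {p : V × List A // pathChain src tgt p.2 ∧ startsAt src p.1 p.2 ∧
        monOf arr e p.1 p.2 ≠ 0} => monOf arr e p.1.1 p.1.2)) = ⊤
  two_out : ∀ (v : V) (a b c : A), src a = v → src b = v → src c = v → a = b ∨ a = c ∨ b = c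
  two_in : ∀ (v : V) (a b c : A), tgt a = v → tgt b = v → tgt c = v → a = b ∨ a = c ∨ b = c
  uniq_post : ∀ (a b c : A), arr b * arr a ≠ 0 → arr c * arr a ≠ 0 → b = c
  uniq_pre : ∀ (a b c : A), arr a * arr b ≠ 0 → arr a * arr c ≠ 0 → b = c

variable {K Λ : Type} [Field K] [Ring Λ] [Algebra K Λ]

/-- `Λ` is a string algebra (for the fixed `K`-algebra structure). -/
def IsStringAlgebra (K Λ : Type) [Field K] [Ring Λ] [Algebra K Λ] : Prop :=
  Nonempty (StringPres K Λ)

namespace StringPres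

variable (P : StringPres K Λ)

/-- The path monomial of `P` at vertex `v` along the list of arrows `l`. -/
def mon (v : P.V) (l : List P.A) : Λ := monOf P.arr P.e v l

/-- `l` is a legal path (not in the relation ideal) starting at `v`. -/
def legal (v : P.V) (l : List P.A) : Prop :=
  pathChain P.src P.tgt l ∧ startsAt P.src v l ∧ P.mon v l ≠ 0

/-- End vertex (target) of the path `l` starting at `v`. -/
def endV (v : P.V) : List P.A → P.V
  | [] => v
  | a :: _ => P.tgt a

end StringPres

/-- `p⁻¹q` is a word: both paths are legal, start at the common vertex `v`, and have
distinct first arrows when both are nontrivial.  (The first arrow of a path is the last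
entry of the encoding list.) -/
def IsWordPair (P : StringPres K Λ) (v : P.V) (p q : List P.A) : Prop :=
  P.legal v p ∧ P.legal v q ∧ (p ≠ [] → q ≠ [] → p.getLast? ≠ q.getLast?)

/-- `u` is the longest path with `u ++ l` a legal path (the path `𝔲` of the paper). -/
def IsLongestExt (P : StringPres K Λ) (v : P.V) (l u : List P.A) : Prop :=
  P.legal v (u ++ l) ∧ ∀ u' : List P.A, P.legal v (u' ++ l) → u'.length ≤ u.length

/-- The relations defining the cyclic string module `St(p⁻¹q)` as a quotient of `Λ`:
kill `1 - e v` and all path monomials at `v` which are not right subpaths of `p` or `q`. -/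
def veeRels (P : StringPres K Λ) (v : P.V) (p q : List P.A) : Set Λ :=
  {1 - P.e v} ∪ {x | ∃ l : List P.A, ¬ l <:+ p ∧ ¬ l <:+ q ∧ x = P.mon v l}

/-- The cyclic string module `St(p⁻¹q)`, with top element the class of `1`. -/
abbrev StVee (P : StringPres K Λ) (v : P.V) (p q : List P.A) : Type :=
  Λ ⧸ Submodule.span Λ (veeRels P v p q)

/-- The simple module `Λe/Je` attached to a vertex. -/
abbrev SimpleAt (P : StringPres K Λ) (v : P.V) : Type :=
  Λ ⧸ Submodule.span Λ ({1 - P.e v} ∪ Set.range fun a => P.arr a * P.e v)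

/-- The syllable at (doubled) position `k`: even positions carry the `p`-syllables,
odd positions the `q`-syllables, in the order `… pᵢ⁻¹ qᵢ p_{i+1}⁻¹ q_{i+1} …`. -/
def sylOf {A : Type} (p q : ℤ → List A) (k : ℤ) : List A :=
  if Even k then p (k / 2) else q ((k - 1) / 2)

/-- A generalized word `w = (pᵢ⁻¹qᵢ)_{i∈ℤ}`, centered (trivial syllables occur only at the
two tail ends, and position `0` lies in the support unless `w` is trivial). -/
structure GenWord (P : StringPres K Λ) : Type where
  E : ℤ → P.V
  p : ℤ → List P.A
  q : ℤ → List P.A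
  pair : ∀ i, IsWordPair P (E i) (p i) (q i)
  link_v : ∀ i, q i ≠ [] → p (i + 1) ≠ [] →
    P.endV (E i) (q i) = P.endV (E (i + 1)) (p (i + 1))
  link_a : ∀ i, q i ≠ [] → p (i + 1) ≠ [] → (q i).head? ≠ (p (i + 1)).head?
  conn : ∀ i j k : ℤ, i ≤ j → j ≤ k → sylOf p q i ≠ [] → sylOf p q k ≠ [] → sylOf p q j ≠ []
  centered : (∀ i, p i = [] ∧ q i = []) ∨ (p 0 ≠ [] ∨ q 0 ≠ [])

namespace GenWord

variable {P : StringPres K Λ}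

/-- The support of a generalized word. -/
def supp (w : GenWord P) : Set ℤ := {i | w.p i ≠ [] ∨ w.q i ≠ []}

/-- The support, with the center adjoined. -/
def supp' (w : GenWord P) : Set ℤ := w.supp ∪ {0}

/-- A word is finite if its support is. -/
def IsFiniteWord (w : GenWord P) : Prop := w.supp.Finite

end GenWord

/-- The relations presenting the generalized string module `St(w)` as a quotient of the
free module `⊕_{i∈ℤ} Λ`: coordinates off the support are killed, each kept coordinate is a
copy of `Λe(i)`, consecutive coordinates are glued by `qᵢ xᵢ = p_{i+1} x_{i+1}`, and the
boundary correction terms `Λ·(α pₗ)` resp. `Λ·(β q_r)` are imposed at a least/greatest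
support element when the word admits a one-arrow extension there. -/
def genRels (P : StringPres K Λ) (w : GenWord P) : Set (ℤ →₀ Λ) :=
  {x | ∃ i : ℤ, x = Finsupp.single i (1 - P.e (w.E i))} ∪
  {x | ∃ i : ℤ, i ∉ w.supp' ∧ x = Finsupp.single i (1 : Λ)} ∪
  {x | ∃ i : ℤ, i ∈ w.supp' ∧ (i + 1) ∈ w.supp' ∧
      x = Finsupp.single i (P.mon (w.E i) (w.q i)) -
          Finsupp.single (i + 1) (P.mon (w.E (i + 1)) (w.p (i + 1)))} ∪
  {x | ∃ l : ℤ, IsLeast w.supp' l ∧ ∃ α : P.A, IsWordPair P (w.E l) (α :: w.p l) (w.q l) ∧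
      x = Finsupp.single l (P.mon (w.E l) (α :: w.p l))} ∪
  {x | ∃ r : ℤ, IsGreatest w.supp' r ∧ ∃ β : P.A, IsWordPair P (w.E r) (w.p r) (β :: w.q r) ∧
      x = Finsupp.single r (P.mon (w.E r) (β :: w.q r))}

/-- The (generalized) string module `St(w)`. -/
abbrev StGen (P : StringPres K Λ) (w : GenWord P) : Type :=
  (ℤ →₀ Λ) ⧸ Submodule.span Λ (genRels P w)

/-- Projective dimension at most `n`, defined via syzygies. -/
def projDimLE (Λ : Type) [Ring Λ] : ℕ → ModuleCat.{0} Λ → Prop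
  | 0, M => Module.Projective Λ M
  | n + 1, M => ∃ (P : ModuleCat.{0} Λ) (f : ↑P →ₗ[Λ] ↑M), Module.Projective Λ P ∧
      Function.Surjective f ∧ projDimLE Λ n (ModuleCat.of Λ (LinearMap.ker f))

/-- Finite projective dimension. -/
def HasFinPD (Λ : Type) [Ring Λ] (M : Type) [AddCommGroup M] [Module Λ M] : Prop :=
  ∃ n, projDimLE Λ n (ModuleCat.of Λ M)

/-- The Jacobson radical of `Λ`, as a left ideal. -/
def jrad (Λ : Type) [Ring Λ] : Ideal Λ := Ideal.jacobson ⊥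

/-- Global dimension at most `n`. -/
def glDimLE (Λ : Type) [Ring Λ] (n : ℕ) : Prop := ∀ M : ModuleCat.{0} Λ, projDimLE Λ n M

/-- Little left finitistic dimension at most `n`. -/
def finDimLE (Λ : Type) [Ring Λ] (n : ℕ) : Prop :=
  ∀ M : ModuleCat.{0} Λ, Module.Finite Λ M → HasFinPD Λ M → projDimLE Λ n M

/-- Big left finitistic dimension at most `n`. -/
def bigFinDimLE (Λ : Type) [Ring Λ] (n : ℕ) : Prop :=
  ∀ M : ModuleCat.{0} Λ, HasFinPD Λ M → projDimLE Λ n M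

/-- The subcategory `𝒫^{<∞}(Λ-mod)` of finitely generated modules of finite projective
dimension, as a predicate on `ModuleCat Λ`. -/
def Pinf (Λ : Type) [Ring Λ] : ModuleCat.{0} Λ → Prop :=
  fun M => Module.Finite Λ M ∧ HasFinPD Λ M

/-- The subcategory `𝒮^{<∞}(Λ-mod)`: finite direct sums of (finite-dimensional) string
modules of finite projective dimension. -/
def Sinf (P : StringPres K Λ) : ModuleCat.{0} Λ → Prop := fun M =>
  ∃ (m : ℕ) (ws : Fin m → GenWord P), (∀ i, (ws i).IsFiniteWord) ∧
    (∀ i, HasFinPD Λ (StGen P (ws i))) ∧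
    Nonempty ((M : Type) ≃ₗ[Λ] ∀ i, StGen P (ws i))

/-- `φ : A → M` is a right `𝒜`-approximation of `M`. -/
def IsRightApprox (𝒜 : ModuleCat.{0} Λ → Prop) (M A : ModuleCat.{0} Λ)
    (φ : ↑A →ₗ[Λ] ↑M) : Prop :=
  𝒜 A ∧ ∀ B : ModuleCat.{0} Λ, 𝒜 B → ∀ f : ↑B →ₗ[Λ] ↑M, ∃ g : ↑B →ₗ[Λ] ↑A, φ.comp g = f

/-- Minimal right approximation: a right approximation which embeds as a direct summand,
compatibly, into every right approximation. -/
def IsMinimalRightApprox (𝒜 : ModuleCat.{0} Λ → Prop) (M A : ModuleCat.{0} Λ)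
    (φ : ↑A →ₗ[Λ] ↑M) : Prop :=
  IsRightApprox (Λ := Λ) 𝒜 M A φ ∧ ∀ (A' : ModuleCat.{0} Λ) (φ' : ↑A' →ₗ[Λ] ↑M),
    IsRightApprox (Λ := Λ) 𝒜 M A' φ' →
    ∃ (ι : ↑A →ₗ[Λ] ↑A') (π : ↑A' →ₗ[Λ] ↑A), π.comp ι = LinearMap.id ∧ φ'.comp ι = φ

/-- `𝒜` is contravariantly finite in `Λ-mod`. -/
def ContravariantlyFinite (𝒜 : ModuleCat.{0} Λ → Prop) : Prop :=
  ∀ M : ModuleCat.{0} Λ, Module.Finite Λ M →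
    ∃ (A : ModuleCat.{0} Λ) (φ : ↑A →ₗ[Λ] ↑M), IsRightApprox (Λ := Λ) 𝒜 M A φ

/-- `φ : A → M` is a relative `C`-approximation of `M` in `𝒜`. -/
def IsRelCApprox (𝒜 : ModuleCat.{0} Λ → Prop) (C M A : ModuleCat.{0} Λ)
    (φ : ↑A →ₗ[Λ] ↑M) : Prop :=
  𝒜 A ∧ ∀ f : ↑C →ₗ[Λ] ↑M, ∃ g : ↑C →ₗ[Λ] ↑A, φ.comp g = f

/-- `H` is a subfactor of `A` (an epimorphic image of a submodule). -/
def IsSubfactor (Λ : Type) [Ring Λ] (H : Type) [AddCommGroup H] [Module Λ H]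
    (A : Type) [AddCommGroup A] [Module Λ A] : Prop :=
  ∃ (N : Submodule Λ A) (g : ↥N →ₗ[Λ] H), Function.Surjective g

/-- A finitely generated module `H` is an `𝒜`-phantom of `M`: some witness `C ∈ 𝒜`
forces `H` to be a subfactor of every relative `C`-approximation of `M` in `𝒜`. -/
def IsPhantomFG (𝒜 : ModuleCat.{0} Λ → Prop) (M : ModuleCat.{0} Λ)
    (H : Type) [AddCommGroup H] [Module Λ H] : Prop :=
  ∃ C : ModuleCat.{0} Λ, 𝒜 C ∧ ∀ (A : ModuleCat.{0} Λ) (φ : ↑A →ₗ[Λ] ↑M),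
    IsRelCApprox (Λ := Λ) 𝒜 C M A φ → IsSubfactor Λ H A

/-- An arbitrary module `H` is an `𝒜`-phantom of `M`: every finitely generated submodule is. -/
def IsPhantom (𝒜 : ModuleCat.{0} Λ → Prop) (M : ModuleCat.{0} Λ)
    (H : Type) [AddCommGroup H] [Module Λ H] : Prop :=
  ∀ N : Submodule Λ H, N.FG → IsPhantomFG (Λ := Λ) 𝒜 M ↥N

/-- `H` is a direct limit of modules from `𝒞`. -/
def IsDirLimOf (𝒞 : ModuleCat.{0} Λ → Prop) (H : Type) [AddCommGroup H] [Module Λ H] : Prop :=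
  ∃ (G : ℕ → ModuleCat.{0} Λ) (f : ∀ i j : ℕ, i ≤ j → ↑(G i) →ₗ[Λ] ↑(G j)),
    DirectedSystem (fun n => ↑(G n)) (fun i j h => f i j h) ∧ (∀ n, 𝒞 (G n)) ∧
    Nonempty ((Module.DirectLimit (fun n => ↑(G n)) f) ≃ₗ[Λ] H)

/-- `φ : H → M` is an effective `𝒞`-phantom of `M`. -/
def IsEffectivePhantom (𝒞 : ModuleCat.{0} Λ → Prop) (M : ModuleCat.{0} Λ)
    (H : Type) [AddCommGroup H] [Module Λ H] (φ : H →ₗ[Λ] ↑M) : Prop :=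
  IsPhantom (Λ := Λ) 𝒞 M H ∧ IsDirLimOf (Λ := Λ) 𝒞 H ∧
    ∀ B : ModuleCat.{0} Λ, 𝒞 B → ∀ f : ↑B →ₗ[Λ] ↑M, ∃ g : ↑B →ₗ[Λ] H, φ.comp g = f

/-- A primitive cyclic word `v = p₀⁻¹q₀ … p_t⁻¹q_t` (all syllables nontrivial, `v²` again a
word, and `v` not a power of a strictly shorter word). -/
structure BandWord (P : StringPres K Λ) : Type where
  t : ℕ
  E : Fin (t + 1) → P.V
  p : Fin (t + 1) → List P.A
  q : Fin (t + 1) → List P.A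
  pair : ∀ i, IsWordPair P (E i) (p i) (q i)
  nontriv : ∀ i, p i ≠ [] ∧ q i ≠ []
  link_v : ∀ i, P.endV (E i) (q i) = P.endV (E (i + 1)) (p (i + 1))
  link_a : ∀ i, (q i).head? ≠ (p (i + 1)).head?
  primitive : ∀ d : ℕ, d ∣ (t + 1) → d ≠ t + 1 →
    ¬ (∀ i j : Fin (t + 1), (i : ℕ) % d = (j : ℕ) % d → p i = p j ∧ q i = q j ∧ E i = E j)

/-- The relations presenting the pseudo-band module `Bd(v^{r+1}, φ)`, where the cyclic
automorphism `φ` of `K^{r+1}` is given by the Frobenius companion matrix with last column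
`c` (cyclicity of `φ` corresponds to `c 0 ≠ 0`). -/
def bandRels (P : StringPres K Λ) (v : BandWord P) (r : ℕ) (c : Fin (r + 1) → K) :
    Set ((Fin (r + 1) × Fin (v.t + 1)) → Λ) :=
  {x | ∃ ij : Fin (r + 1) × Fin (v.t + 1), x = Pi.single ij (1 - P.e (v.E ij.2))} ∪
  {x | ∃ (i : Fin (r + 1)) (j : Fin v.t),
      x = Pi.single (i, j.castSucc) (P.mon (v.E j.castSucc) (v.q j.castSucc)) -
          Pi.single (i, j.succ) (P.mon (v.E j.succ) (v.p j.succ))} ∪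
  {x | ∃ i : Fin r,
      x = Pi.single (i.castSucc, Fin.last v.t) (P.mon (v.E (Fin.last v.t)) (v.q (Fin.last v.t))) -
          Pi.single (i.succ, 0) (P.mon (v.E 0) (v.p 0))} ∪
  { Pi.single (Fin.last r, Fin.last v.t) (P.mon (v.E (Fin.last v.t)) (v.q (Fin.last v.t))) -
      ∑ i : Fin (r + 1), Pi.single (i, 0) (algebraMap K Λ (c i) * P.mon (v.E 0) (v.p 0)) }

/-- The pseudo-band module `Bd(v^{r+1}, φ_c)`. -/
abbrev BdMod (P : StringPres K Λ) (v : BandWord P) (r : ℕ) (c : Fin (r + 1) → K) : Type :=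
  ((Fin (r + 1) × Fin (v.t + 1)) → Λ) ⧸ Submodule.span Λ (bandRels P v r c)

open Fin.IntCast in
/-- `w` is the `ℤ`-periodic word `… v v v …` obtained from the primitive word `v`. -/
def PeriodicOf (P : StringPres K Λ) (v : BandWord P) (w : GenWord P) : Prop :=
  ∀ i : ℤ, w.p i = v.p (i : Fin (v.t + 1)) ∧ w.q i = v.q (i : Fin (v.t + 1)) ∧
    w.E i = v.E (i : Fin (v.t + 1))

/-- `w` agrees with `w'` (shifted by `k`) on all syllables in positions `-t,…,t`, except
that trivial boundary syllables of the truncation are not required to match (the truncation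
`w_t` of `w` is a *segment* of `w'`). -/
def MatchUpTo (P : StringPres K Λ) (w w' : GenWord P) (k : ℤ) (t : ℕ) : Prop :=
  (∀ i : ℤ, -(t : ℤ) ≤ i → i ≤ (t : ℤ) → w.E i = w'.E (i + k)) ∧
  (∀ i : ℤ, -(t : ℤ) < i → i ≤ (t : ℤ) → w.p i = w'.p (i + k)) ∧
  (∀ i : ℤ, -(t : ℤ) ≤ i → i < (t : ℤ) → w.q i = w'.q (i + k)) ∧
  (w.p (-(t : ℤ)) ≠ [] → w.p (-(t : ℤ)) = w'.p (-(t : ℤ) + k)) ∧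
  (w.q (t : ℤ) ≠ [] → w.q (t : ℤ) = w'.q ((t : ℤ) + k))

/-- `w` is *the* characteristic word of the simple module attached to the vertex `v`:
it is centered at `v`, each finite truncation is a segment of a word of finite projective
dimension, the central pair of syllables is length-minimal with this property, and at
each inductive step the outer syllables `q₋ₜ, pₜ` are chosen longest and the inner
syllables `p₋ₜ, qₜ` shortest, subject to remaining a segment of a word of finite
projective dimension (Construction 12 of the paper). -/
def IsCharWord (P : StringPres K Λ) (w : GenWord P) (v : P.V) : Prop :=
  w.E 0 = v ∧
  (∀ t : ℕ, ∃ (w' : GenWord P) (k : ℤ), HasFinPD Λ (StGen P w') ∧ MatchUpTo P w w' k t) ∧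
  (∀ (w' : GenWord P) (k : ℤ), HasFinPD Λ (StGen P w') → w'.E k = v →
      (w.p 0).length + (w.q 0).length ≤ (w'.p k).length + (w'.q k).length) ∧
  (∀ (t : ℕ) (w' : GenWord P) (k : ℤ), HasFinPD Λ (StGen P w') → MatchUpTo P w w' k t →
      (w'.p ((t : ℤ) + 1 + k)).length ≤ (w.p ((t : ℤ) + 1)).length ∧
      (w'.q (-(t : ℤ) - 1 + k)).length ≤ (w.q (-(t : ℤ) - 1)).length) ∧
  (∀ (t : ℕ) (w' : GenWord P) (k : ℤ), HasFinPD Λ (StGen P w') → MatchUpTo P w w' k t →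
      w'.p ((t : ℤ) + 1 + k) = w.p ((t : ℤ) + 1) →
      w'.q (-(t : ℤ) - 1 + k) = w.q (-(t : ℤ) - 1) →
      (w.q ((t : ℤ) + 1)).length ≤ (w'.q ((t : ℤ) + 1 + k)).length ∧
      (w.p (-(t : ℤ) - 1)).length ≤ (w'.p (-(t : ℤ) - 1 + k)).length)

/-- The canonical map `St(w) → Λe/Je` of a centered word: it sends the central standardized
top element to the residue class of the identity, and the other standardized top elements
to zero. -/
def IsCanonicalMap (P : StringPres K Λ) (w : GenWord P) (v : P.V)
    (φ : StGen P w →ₗ[Λ] SimpleAt P v) : Prop :=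
  φ (Submodule.Quotient.mk (Finsupp.single 0 1)) = Submodule.Quotient.mk 1 ∧
  ∀ i : ℤ, i ≠ 0 → φ (Submodule.Quotient.mk (Finsupp.single i 1)) = 0

/-- A uniserial module: submodules are linearly ordered by inclusion. -/
def IsUniserialMod (Λ : Type) [Ring Λ] (M : Type) [AddCommGroup M] [Module Λ M] : Prop :=
  ∀ N N' : Submodule Λ M, N ≤ N' ∨ N' ≤ N

/-- The data of a cyclic string module `St(p⁻¹q)` in the set `𝒯`: of finite projective
dimension and embeddable in the Jacobson radical `J`. -/
def InT (P : StringPres K Λ) (d : P.V × List P.A × List P.A) : Prop :=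
  IsWordPair P d.1 d.2.1 d.2.2 ∧ HasFinPD Λ (StVee P d.1 d.2.1 d.2.2) ∧
    ∃ f : StVee P d.1 d.2.1 d.2.2 →ₗ[Λ] ↥(jrad Λ), Function.Injective f

/-- `M` is (isomorphic to) a cyclic string module `St(p⁻¹q)`. -/
def IsVeeStringModule (P : StringPres K Λ) (M : Type) [AddCommGroup M] [Module Λ M] : Prop :=
  ∃ (v : P.V) (p q : List P.A), IsWordPair P v p q ∧ Nonempty (M ≃ₗ[Λ] StVee P v p q)

/-- The word `u` occurs as a segment of the word `w`, shifted by `k`: every nontrivial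
syllable of `u` equals the corresponding syllable of `w`. -/
def SegOf (P : StringPres K Λ) (u w : GenWord P) (k : ℤ) : Prop :=
  ∀ i : ℤ, (u.p i ≠ [] → u.p i = w.p (i + k)) ∧ (u.q i ≠ [] → u.q i = w.q (i + k)) ∧
    (i ∈ u.supp' → u.E i = w.E (i + k))

end StringAlg

namespace StringAlg

/-! `Bd(v^{r+1}, φ_c)` is functorial in `φ`: a scalar matrix `M` with
`companion c₂ * M = M * companion c₁`, i.e. a `K[X]`-linear map between the cyclic `K[X]`-modules
`K[X]/(f₁) → K[X]/(f₂)` of the two automorphisms, acts on the free module copy by copy of `v` and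
preserves the band relations. It therefore suffices to realise `K[X]/(f)`, with `f` the
characteristic polynomial of `φ`, as a direct summand of some `K[X]/(g)` with `deg g = s + 1` and
`g(0) ≠ 0`. As `K` is infinite there is `a ≠ 0` with `f(a) ≠ 0`; take `h = (X - a)^(s-r)` and
`g = f h`. If `α f + β h = 1`, multiplication by `h` embeds `K[X]/(f)` into `K[X]/(g)`, and
multiplication by `β` is a retraction because `β h ≡ 1 mod f`. -/

section CompanionMatrices

open Polynomial

variable {R : Type*} [CommRing R]

theorem mul_modByMonic_modByMonic_of_dvd {u g g' : R[X]} (hg' : g'.Monic) (hdvd : g' ∣ u * g)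
    (p : R[X]) : (u * (p %ₘ g)) %ₘ g' = (u * p) %ₘ g' := by
  conv_rhs => rw [← modByMonic_add_div p g, mul_add, add_modByMonic]
  rw [(modByMonic_eq_zero_iff_dvd hg').2 ((hdvd.mul_right _).trans (mul_assoc _ _ _).dvd),
    add_zero]

theorem coeff_mul_modByMonic_eq_sum (u g : R[X]) {p : R[X]} {n : ℕ} (hp : p.degree < n)
    (l : ℕ) :
    ((u * p) %ₘ g).coeff l = ∑ k : Fin n, ((u * X ^ (k : ℕ)) %ₘ g).coeff l * p.coeff k := by
  have hp_sum : p = ∑ k : Fin n, p.coeff k • X ^ (k : ℕ) := by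
    simp_rw [← C_mul']
    rw [sum_fin (fun k a => C a * X ^ k) (by simp) hp, sum_C_mul_X_pow_eq]
  let L := (lcoeff R l).comp ((modByMonicHom g).comp (LinearMap.mulLeft R u))
  change L p = ∑ k : Fin n, L (X ^ (k : ℕ)) * p.coeff k
  conv_lhs => rw [hp_sum]
  simp [map_sum, mul_comm]

/-- The matrix of multiplication by `u`, `R[X]/(f) → R[X]/(g)`, in the monomial bases
(`n = deg f`, `m = deg g`); it represents a well-defined map when `g ∣ u * f`. -/
noncomputable def mulMatrix (m n : ℕ) (u g : R[X]) : Matrix (Fin m) (Fin n) R :=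
  Matrix.of fun l k => ((u * X ^ (k : ℕ)) %ₘ g).coeff l

theorem mulMatrix_mul [Nontrivial R] {m₁ n₂ m₃ : ℕ} {u u' g₂ g₃ : R[X]} (hg₂ : g₂.Monic)
    (hdeg : g₂.degree = n₂) (hg₃ : g₃.Monic) (hdvd : g₃ ∣ u * g₂) :
    mulMatrix m₃ n₂ u g₃ * mulMatrix n₂ m₁ u' g₂ = mulMatrix m₃ m₁ (u * u') g₃ := by
  ext l i
  have hlt : ((u' * X ^ (i : ℕ)) %ₘ g₂).degree < n₂ := hdeg ▸ degree_modByMonic_lt _ hg₂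
  rw [Matrix.mul_apply]
  simp only [mulMatrix, Matrix.of_apply]
  rw [← coeff_mul_modByMonic_eq_sum _ _ hlt, mul_modByMonic_modByMonic_of_dvd hg₃ hdvd, mul_assoc]

theorem mulMatrix_eq_of_dvd_sub {m n : ℕ} {u u' g : R[X]} (hg : g.Monic) (hdvd : g ∣ u - u') :
    mulMatrix m n u g = mulMatrix m n u' g := by
  ext l k
  simp only [mulMatrix, Matrix.of_apply]
  rw [modByMonic_eq_of_dvd_sub hg (by rw [← sub_mul]; exact hdvd.mul_right _)]

theorem mulMatrix_one [Nontrivial R] {n : ℕ} {g : R[X]} (hg : g.Monic) (hdeg : g.degree = n) :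
    mulMatrix n n 1 g = 1 := by
  ext l k
  have hk : (X ^ (k : ℕ) : R[X]) %ₘ g = X ^ (k : ℕ) :=
    (modByMonic_eq_self_iff hg).2 (by rw [degree_X_pow, hdeg]; exact_mod_cast k.isLt)
  simp [mulMatrix, Matrix.one_apply, hk, coeff_X_pow, Fin.val_inj]

theorem mulMatrix_X_mul_comm [Nontrivial R] {n₁ n₂ : ℕ} {u g₁ g₂ : R[X]} (hg₁ : g₁.Monic)
    (hdeg₁ : g₁.degree = n₁) (hg₂ : g₂.Monic) (hdeg₂ : g₂.degree = n₂) (hdvd : g₂ ∣ u * g₁) :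
    mulMatrix n₂ n₂ X g₂ * mulMatrix n₂ n₁ u g₂ =
      mulMatrix n₂ n₁ u g₂ * mulMatrix n₁ n₁ X g₁ := by
  rw [mulMatrix_mul hg₂ hdeg₂ hg₂ (dvd_mul_left _ _), mulMatrix_mul hg₁ hdeg₁ hg₂ hdvd, mul_comm]

def companion {n : ℕ} (c : Fin (n + 1) → R) : Matrix (Fin (n + 1)) (Fin (n + 1)) R :=
  Matrix.of fun l k => Fin.lastCases (c l) (fun i => if l = i.succ then 1 else 0) k

theorem mulMatrix_X_eq_companion [Nontrivial R] {n : ℕ} {g : R[X]} (hg : g.Monic)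
    (hdeg : g.degree = (n + 1 : ℕ)) :
    mulMatrix (n + 1) (n + 1) X g = companion fun i => -g.coeff i := by
  ext l k
  induction k using Fin.lastCases with
  | last =>
    have hlt : (X ^ (n + 1) - g).degree < g.degree := by
      refine degree_sub_lt_right (by rw [degree_X_pow, hdeg]) hg.ne_zero ?_
      rw [leadingCoeff_X_pow, hg.leadingCoeff]
    have hmod : (X ^ (n + 1) : R[X]) %ₘ g = X ^ (n + 1) - g := by
      rw [modByMonic_eq_of_dvd_sub hg (p₂ := X ^ (n + 1) - g) (by simp),
        (modByMonic_eq_self_iff hg).2 hlt]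
    have hl : (l : ℕ) ≠ n + 1 := l.isLt.ne
    simp [mulMatrix, companion, ← pow_succ', hmod, coeff_X_pow, hl]
  | cast i =>
    have hi : (X ^ ((i : ℕ) + 1) : R[X]) %ₘ g = X ^ ((i : ℕ) + 1) :=
      (modByMonic_eq_self_iff hg).2 (by
        rw [degree_X_pow, hdeg]; exact_mod_cast Nat.succ_lt_succ i.isLt)
    simp [mulMatrix, companion, ← pow_succ', hi, coeff_X_pow, Fin.ext_iff]

theorem exists_mulMatrix_retraction [Nontrivial R] {n₁ n₂ : ℕ} {f h : R[X]} (hf : f.Monic)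
    (hh : h.Monic) (hdeg₁ : f.degree = n₁) (hdeg₂ : (f * h).degree = n₂) (hcop : IsCoprime f h) :
    ∃ (ι : Matrix (Fin n₂) (Fin n₁) R) (π : Matrix (Fin n₁) (Fin n₂) R),
      mulMatrix n₂ n₂ X (f * h) * ι = ι * mulMatrix n₁ n₁ X f ∧
      mulMatrix n₁ n₁ X f * π = π * mulMatrix n₂ n₂ X (f * h) ∧ π * ι = 1 := by
  obtain ⟨a, b, hab⟩ := hcop
  have hfh := hf.mul hh
  refine ⟨mulMatrix n₂ n₁ h (f * h), mulMatrix n₁ n₂ b f,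
    mulMatrix_X_mul_comm hf hdeg₁ hfh hdeg₂ (by rw [mul_comm]),
    mulMatrix_X_mul_comm hfh hdeg₂ hf hdeg₁ ⟨b * h, by ring⟩, ?_⟩
  rw [mulMatrix_mul hfh hdeg₂ hf ⟨b * h, by ring⟩,
    mulMatrix_eq_of_dvd_sub (u' := 1) hf ⟨-a, by linear_combination hab⟩, mulMatrix_one hf hdeg₁]

noncomputable def companionPoly {n : ℕ} (c : Fin (n + 1) → R) : R[X] :=
  X ^ (n + 1) - ∑ i : Fin (n + 1), C (c i) * X ^ (i : ℕ)

section CompanionPoly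

variable {n : ℕ} (c : Fin (n + 1) → R)

theorem companionPoly_monic : (companionPoly c).Monic :=
  monic_X_pow_sub (degree_sum_fin_lt c)

theorem degree_companionPoly [Nontrivial R] : (companionPoly c).degree = (n + 1 : ℕ) := by
  rw [companionPoly, degree_sub_eq_left_of_degree_lt] <;> rw [degree_X_pow]
  exact degree_sum_fin_lt c

theorem neg_coeff_companionPoly (i : Fin (n + 1)) : -(companionPoly c).coeff i = c i := by
  have hi : (i : ℕ) ≠ n + 1 := i.isLt.ne
  simp [companionPoly, coeff_X_pow, hi, Fin.val_inj]

end CompanionPoly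

theorem exists_monic_isCoprime {K : Type*} [Field K] [Infinite K] {f : K[X]} (hf : f ≠ 0)
    (d : ℕ) :
    ∃ h : K[X], h.Monic ∧ h.degree = d ∧ IsCoprime f h ∧ h.coeff 0 ≠ 0 := by
  obtain ⟨a, ha⟩ := exists_eval_ne_zero_of_natDegree_lt_card (X * f) (mul_ne_zero X_ne_zero hf)
    (Cardinal.natCast_lt_aleph0.trans_le (Cardinal.aleph0_le_mk K))
  rw [eval_mul, eval_X, mul_ne_zero_iff] at ha
  refine ⟨(X - C a) ^ d, (monic_X_sub_C a).pow d, by simp, ?_, ?_⟩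
  · exact (((irreducible_X_sub_C a).coprime_iff_not_dvd).2
      (by rw [dvd_iff_isRoot]; exact ha.2)).symm.pow_right
  · simp [coeff_zero_eq_eval_zero, ha.1]

theorem exists_companion_retraction {K : Type*} [Field K] [Infinite K] {r s : ℕ}
    (c : Fin (r + 1) → K) (hc : c 0 ≠ 0) (hrs : r ≤ s) :
    ∃ c' : Fin (s + 1) → K, c' 0 ≠ 0 ∧
      ∃ (ι : Matrix (Fin (s + 1)) (Fin (r + 1)) K) (π : Matrix (Fin (r + 1)) (Fin (s + 1)) K),
        companion c' * ι = ι * companion c ∧ companion c * π = π * companion c' ∧ π * ι = 1 := by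
  set f := companionPoly c
  have hf : f.Monic := companionPoly_monic c
  have hdeg : f.degree = (r + 1 : ℕ) := degree_companionPoly c
  obtain ⟨h, hh, hdegh, hcop, hh0⟩ := exists_monic_isCoprime hf.ne_zero (s - r)
  have hdeg' : (f * h).degree = (s + 1 : ℕ) := by
    rw [degree_mul, hdeg, hdegh, ← Nat.cast_add]
    congr 1
    omega
  have hc_eq : c = fun i : Fin (r + 1) => -f.coeff i :=
    funext fun i => (neg_coeff_companionPoly c i).symm
  refine ⟨fun i : Fin (s + 1) => -(f * h).coeff i, ?_, ?_⟩
  · have hf0 : f.coeff 0 = -c 0 := by rw [hc_eq, neg_neg]; rfl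
    simp [mul_coeff_zero, hf0, hc, hh0]
  · rw [hc_eq, ← mulMatrix_X_eq_companion hf hdeg, ← mulMatrix_X_eq_companion (hf.mul hh) hdeg']
    exact exists_mulMatrix_retraction hf hh hdeg hdeg' hcop

end CompanionMatrices

section MatMap

variable {K Λ : Type*} [CommSemiring K] [Semiring Λ] [Algebra K Λ]

def matMap {ι₁ ι₂ : Type*} [Fintype ι₁] (J : Type*) (M : Matrix ι₂ ι₁ K) :
    (ι₁ × J → Λ) →ₗ[Λ] (ι₂ × J → Λ) where
  toFun x kj := ∑ i, M kj.1 i • x (i, kj.2)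
  map_add' x y := by
    ext kj
    simp [Finset.sum_add_distrib]
  map_smul' a x := by
    ext kj
    simp [Finset.mul_sum]

variable {ι₁ ι₂ ι₃ : Type*} [Fintype ι₁] [Fintype ι₂] (J : Type*)

theorem matMap_single [DecidableEq ι₁] [DecidableEq ι₂] [DecidableEq J] (M : Matrix ι₂ ι₁ K)
    (i : ι₁) (j : J) (y : Λ) :
    matMap J M (Pi.single (i, j) y) = ∑ k, M k i • Pi.single (k, j) y := by
  ext ⟨k, j'⟩
  by_cases hj : j' = j
  · subst hj
    simp [matMap, Pi.single_apply, Finset.sum_apply]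
  · simp [matMap, Finset.sum_apply, hj]

theorem matMap_mul (A : Matrix ι₃ ι₂ K) (B : Matrix ι₂ ι₁ K) :
    matMap (Λ := Λ) J (A * B) = (matMap J A).comp (matMap J B) := by
  ext x ⟨l, j⟩
  simp only [matMap, Matrix.mul_apply, Finset.sum_smul, mul_smul, LinearMap.coe_mk, AddHom.coe_mk,
    LinearMap.coe_comp, Function.comp_apply, Finset.smul_sum]
  exact Finset.sum_comm

theorem matMap_one [DecidableEq ι₁] : matMap (Λ := Λ) J (1 : Matrix ι₁ ι₁ K) = LinearMap.id := by
  ext x ⟨i, j⟩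
  simp [matMap, Matrix.one_apply]

end MatMap

section BandMaps

variable {K Λ : Type} [Field K] [Ring Λ] [Algebra K Λ] (P : StringPres K Λ) (v : BandWord P)

/-- The relation of `Bd` gluing the end of the `k`-th copy of `v` to the starts of the copies,
with the coefficients of column `k` of `A`. -/
def wrapRel {ι : Type*} [Fintype ι] [DecidableEq ι] (A : Matrix ι ι K) (k : ι) :
    ι × Fin (v.t + 1) → Λ :=
  Pi.single (k, Fin.last v.t) (P.mon (v.E (Fin.last v.t)) (v.q (Fin.last v.t))) -
    matMap _ A (Pi.single (k, 0) (P.mon (v.E 0) (v.p 0)))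

theorem matMap_wrapRel {ι₁ ι₂ : Type*} [Fintype ι₁] [Fintype ι₂] [DecidableEq ι₁]
    [DecidableEq ι₂]
    {A₁ : Matrix ι₁ ι₁ K} {A₂ : Matrix ι₂ ι₂ K} {M : Matrix ι₂ ι₁ K} (hM : A₂ * M = M * A₁)
    (k : ι₁) : matMap _ M (wrapRel P v A₁ k) = ∑ l, M l k • wrapRel P v A₂ l := by
  rw [wrapRel, map_sub, matMap_single, ← LinearMap.comp_apply, ← matMap_mul, ← hM, matMap_mul,
    LinearMap.comp_apply, matMap_single, map_sum]
  simp only [wrapRel, LinearMap.map_smul_of_tower, smul_sub, Finset.sum_sub_distrib]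

variable {r : ℕ} (c : Fin (r + 1) → K)

theorem wrapRel_companion_castSucc (i : Fin r) :
    wrapRel P v (companion c) i.castSucc =
      Pi.single (i.castSucc, Fin.last v.t) (P.mon (v.E (Fin.last v.t)) (v.q (Fin.last v.t))) -
        Pi.single (i.succ, 0) (P.mon (v.E 0) (v.p 0)) := by
  simp [wrapRel, matMap_single, companion, ite_smul]

theorem wrapRel_companion_last :
    wrapRel P v (companion c) (Fin.last r) =
      Pi.single (Fin.last r, Fin.last v.t) (P.mon (v.E (Fin.last v.t)) (v.q (Fin.last v.t))) -
        ∑ i : Fin (r + 1), Pi.single (i, 0) (algebraMap K Λ (c i) * P.mon (v.E 0) (v.p 0)) := by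
  simp only [wrapRel, matMap_single, companion, Matrix.of_apply, Fin.lastCases_last,
    ← Algebra.smul_def, Pi.single_smul']

theorem wrapRel_companion_mem_bandRels (k : Fin (r + 1)) :
    wrapRel P v (companion c) k ∈ bandRels P v r c := by
  induction k using Fin.lastCases with
  | last => exact Or.inr (wrapRel_companion_last P v c)
  | cast i => exact Or.inl (Or.inr ⟨i, wrapRel_companion_castSucc P v c i⟩)

variable {P v} {r₁ r₂ : ℕ} {c₁ : Fin (r₁ + 1) → K} {c₂ : Fin (r₂ + 1) → K}

theorem span_bandRels_le_comap_matMap {M : Matrix (Fin (r₂ + 1)) (Fin (r₁ + 1)) K}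
    (hM : companion c₂ * M = M * companion c₁) :
    Submodule.span Λ (bandRels P v r₁ c₁) ≤
      (Submodule.span Λ (bandRels P v r₂ c₂)).comap (matMap _ M) := by
  have hwrap (k : Fin (r₁ + 1)) :
      matMap _ M (wrapRel P v (companion c₁) k) ∈ Submodule.span Λ (bandRels P v r₂ c₂) := by
    rw [matMap_wrapRel P v hM]
    exact Submodule.sum_mem _ fun l _ => Submodule.smul_of_tower_mem _ _
      (Submodule.subset_span (wrapRel_companion_mem_bandRels P v c₂ l))
  rw [Submodule.span_le]
  rintro x (((⟨⟨i, j⟩, rfl⟩ | ⟨i, j, rfl⟩) | ⟨i, rfl⟩) | rfl) <;>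
    rw [SetLike.mem_coe, Submodule.mem_comap]
  · rw [matMap_single]
    exact Submodule.sum_mem _ fun k _ => Submodule.smul_of_tower_mem _ _
      (Submodule.subset_span (Or.inl (Or.inl (Or.inl ⟨(k, j), rfl⟩))))
  · rw [map_sub, matMap_single, matMap_single, ← Finset.sum_sub_distrib]
    refine Submodule.sum_mem _ fun k _ => ?_
    rw [← smul_sub]
    exact Submodule.smul_of_tower_mem _ _
      (Submodule.subset_span (Or.inl (Or.inl (Or.inr ⟨k, j, rfl⟩))))
  · rw [← wrapRel_companion_castSucc]
    exact hwrap i.castSucc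
  · rw [← wrapRel_companion_last]
    exact hwrap (Fin.last r₁)

variable (P v) in
def bdMap (M : Matrix (Fin (r₂ + 1)) (Fin (r₁ + 1)) K)
    (hM : companion c₂ * M = M * companion c₁) :
    BdMod P v r₁ c₁ →ₗ[Λ] BdMod P v r₂ c₂ :=
  Submodule.mapQ _ _ (matMap _ M) (span_bandRels_le_comap_matMap hM)

theorem bdMap_comp_eq_id {M : Matrix (Fin (r₂ + 1)) (Fin (r₁ + 1)) K}
    {N : Matrix (Fin (r₁ + 1)) (Fin (r₂ + 1)) K} (hM : companion c₂ * M = M * companion c₁)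
    (hN : companion c₁ * N = N * companion c₂) (hNM : N * M = 1) :
    (bdMap P v N hN).comp (bdMap P v M hM) = LinearMap.id := by
  apply Submodule.linearMap_qext
  ext x
  simp [bdMap, ← LinearMap.comp_apply (matMap _ N), ← matMap_mul, hNM, matMap_one]

end BandMaps

theorem pseudo_band_module_summand_of_larger_general
    {K Λ : Type} [Field K] [Infinite K] [Ring Λ] [Algebra K Λ]
    (P : StringPres K Λ) (v : BandWord P) (r : ℕ) (c : Fin (r + 1) → K) (hc : c 0 ≠ 0)
    (s : ℕ) (hrs : r ≤ s) :
    ∃ c' : Fin (s + 1) → K, c' 0 ≠ 0 ∧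
      ∃ (ι : BdMod P v r c →ₗ[Λ] BdMod P v s c')
        (π : BdMod P v s c' →ₗ[Λ] BdMod P v r c), π.comp ι = LinearMap.id := by
  obtain ⟨c', hc', ι, π, hι, hπ, hπι⟩ := exists_companion_retraction c hc hrs
  exact ⟨c', hc', bdMap P v ι hι, bdMap P v π hπ, bdMap_comp_eq_id hι hπ hπι⟩

/-- Remark 21: over an infinite field, any pseudo-band module
`Bd(vʳ, φ)` is a direct summand of a pseudo-band module `Bd(vˢ, ψ)` for every `s ≥ r`. -/
theorem pseudo_band_module_summand_of_larger
    {K Λ : Type} [Field K] [Infinite K] [Ring Λ] [Algebra K Λ] [FiniteDimensional K Λ]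
    (P : StringPres K Λ) (v : BandWord P) (r : ℕ) (c : Fin (r + 1) → K) (hc : c 0 ≠ 0)
    (s : ℕ) (hrs : r ≤ s) :
    ∃ c' : Fin (s + 1) → K, c' 0 ≠ 0 ∧
      ∃ (ι : BdMod P v r c →ₗ[Λ] BdMod P v s c')
        (π : BdMod P v s c' →ₗ[Λ] BdMod P v r c), π.comp ι = LinearMap.id :=
  pseudo_band_module_summand_of_larger_general P v r c hc s hrs

end StringAlg
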